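/- For an integer m ≥ 0, call a finite family of events A₁, …, A_N on a probability space m-dependent if for any two index sets I, J ⊆ {1, …, N} with min{|i − j| : i ∈ I, j ∈ J} > m, the σ-algebras σ(A_i : i ∈ I) and σ(A_j : j ∈ J) are independent. Define c_m* as the supremum of all c > 0 such that P(⋃_{k=1}^N A_k) ≥ 1 − exp(−c·∑_{k=1}^N P(A_k)) holds for every finite m-dependent family of events on every probability space. Then c_m* = 1/(m+1). -/

import Mathlib

/-!
Lower bound: indices in one residue class mod `m + 1` are pairwise more than `m` apart, so
their events are independent and `P(⋃_C A_k) = 1 - ∏_C (1 - P(A_k)) ≥ 1 - exp(-∑_C P(A_k))`;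
by pigeonhole some residue class carries at least `S_N / (m + 1)` of the total mass.
Sharpness: `m + 1` copies of one event of probability `q` are `m`-dependent, since no two
indices in `1, …, m + 1` are more than `m` apart, and `S_N = (m + 1) q`; for `c (m + 1) > 1`
and suitable `q`, `1 - exp(-c (m + 1) q) > q`.
-/

open MeasureTheory

/-- A finite family of events `A 1, …, A N` is `m`-dependent if any two subcollections
whose index sets are separated by more than `m` positions generate independent
σ-algebras. -/
def MDepFamily {Ω : Type} [MeasurableSpace Ω] (P : Measure Ω)
    (m N : ℕ) (A : ℕ → Set Ω) : Prop :=
  ∀ I J : Finset ℕ, ↑I ⊆ Set.Icc 1 N → ↑J ⊆ Set.Icc 1 N →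
    (∀ i ∈ I, ∀ j ∈ J, m < Nat.dist i j) →
    ProbabilityTheory.Indep (MeasurableSpace.generateFrom (A '' ↑I))
      (MeasurableSpace.generateFrom (A '' ↑J)) P

open MeasurableSpace ProbabilityTheory Finset Real

lemma prod_one_sub_le_exp_neg_sum {ι : Type*} (s : Finset ι) (p : ι → ℝ)
    (hp : ∀ k ∈ s, p k ≤ 1) : ∏ k ∈ s, (1 - p k) ≤ exp (-∑ k ∈ s, p k) := by
  rw [← sum_neg_distrib, exp_sum]
  exact prod_le_prod (fun k hk => sub_nonneg.2 (hp k hk)) fun k _ => one_sub_le_exp_neg _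

lemma one_sub_exp_neg_sum_le_measureReal_biUnion {Ω ι : Type*} [MeasurableSpace Ω]
    {P : Measure Ω} [IsProbabilityMeasure P] {s : Finset ι} {A : ι → Set Ω}
    (hA : ∀ k ∈ s, MeasurableSet (A k))
    (hindep : P.real (⋂ k ∈ s, (A k)ᶜ) = ∏ k ∈ s, P.real (A k)ᶜ) :
    1 - exp (-∑ k ∈ s, P.real (A k)) ≤ P.real (⋃ k ∈ s, A k) := by
  have hcompl : ∏ k ∈ s, P.real (A k)ᶜ = ∏ k ∈ s, (1 - P.real (A k)) :=
    prod_congr rfl fun k hk => probReal_compl_eq_one_sub (hA k hk)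
  have hunion : P.real (⋃ k ∈ s, A k) = 1 - P.real (⋂ k ∈ s, (A k)ᶜ) := by
    rw [← probReal_compl_eq_one_sub (s.measurableSet_biInter fun k hk => (hA k hk).compl)]
    simp only [Set.compl_iInter, compl_compl]
  rw [hunion, hindep, hcompl]
  linarith [prod_one_sub_le_exp_neg_sum s (fun k => P.real (A k)) fun k _ => measureReal_le_one]

lemma Nat.lt_dist_of_modEq {m i j : ℕ} (h : i ≡ j [MOD m + 1]) (hij : i ≠ j) :
    m < Nat.dist i j := by
  wlog hlt : i < j generalizing i j
  · rw [Nat.dist_comm]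
    exact this h.symm hij.symm (by omega)
  have : m + 1 ≤ j - i := Nat.le_of_dvd (by omega) ((Nat.modEq_iff_dvd' hlt.le).1 h)
  rw [Nat.dist_eq_sub_of_le hlt.le]
  omega

namespace MDepFamily

variable {Ω : Type} [MeasurableSpace Ω] {P : Measure Ω} {m N : ℕ} {A : ℕ → Set Ω}

lemma of_le_succ [IsZeroOrProbabilityMeasure P] (hN : N ≤ m + 1) : MDepFamily P m N A := by
  intro I J hI hJ hsep
  obtain rfl | ⟨i, hi⟩ := I.eq_empty_or_nonempty
  · simpa using indep_bot_left _
  obtain rfl | ⟨j, hj⟩ := J.eq_empty_or_nonempty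
  · simpa using indep_bot_right _
  have hi' := hI (mem_coe.2 hi)
  have hj' := hJ (mem_coe.2 hj)
  have := hsep i hi j hj
  simp only [Set.mem_Icc, Nat.dist] at hi' hj' this
  omega

lemma measureReal_biInter_compl_eq_prod [IsProbabilityMeasure P] (hdep : MDepFamily P m N A)
    {R : Finset ℕ} (hR : R ⊆ Icc 1 N)
    (hsep : (R : Set ℕ).Pairwise fun i j => m < Nat.dist i j) :
    P.real (⋂ k ∈ R, (A k)ᶜ) = ∏ k ∈ R, P.real (A k)ᶜ := by
  induction R using Finset.induction with
  | empty => simp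
  | @insert a R ha ih =>
    rw [coe_insert, Set.pairwise_insert] at hsep
    have hR' : R ⊆ Icc 1 N := (subset_insert a R).trans hR
    have hindep := hdep {a} R (by simpa using hR (mem_insert_self a R))
      (by rw [← coe_Icc]; exact coe_subset.2 hR') (fun i hi j hj => by
        rw [mem_singleton.1 hi]
        exact (hsep.2 j hj fun h => ha (h ▸ hj)).1)
    have hmul := (Indep_iff _ _ _).1 hindep (A a)ᶜ (⋂ k ∈ R, (A k)ᶜ)
      (measurableSet_generateFrom (by simp)).compl
      (R.measurableSet_biInter fun j hj =>
        (measurableSet_generateFrom (Set.mem_image_of_mem A hj)).compl)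
    rw [set_biInter_insert, prod_insert ha, ← ih hR' hsep.1, measureReal_def, hmul,
      ENNReal.toReal_mul]
    rfl

theorem one_sub_exp_le_measureReal_biUnion [IsProbabilityMeasure P] (hdep : MDepFamily P m N A)
    (hA : ∀ k ∈ Icc 1 N, MeasurableSet (A k)) :
    1 - exp (-(1 / ((m : ℝ) + 1) * ∑ k ∈ Icc 1 N, P.real (A k))) ≤
      P.real (⋃ k ∈ Icc 1 N, A k) := by
  obtain ⟨r, -, hr⟩ := exists_le_sum_fiber_of_maps_to_of_nsmul_le_sum
    (f := fun k => k % (m + 1)) (w := fun k => P.real (A k))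
    (fun k _ => mem_range.2 (Nat.mod_lt k m.succ_pos)) ⟨0, mem_range.2 m.succ_pos⟩
    (b := 1 / ((m : ℝ) + 1) * ∑ k ∈ Icc 1 N, P.real (A k))
    (by rw [card_range, nsmul_eq_mul]; push_cast; field_simp; rfl)
  set C := {k ∈ Icc 1 N | k % (m + 1) = r}
  have hC : C ⊆ Icc 1 N := filter_subset _ _
  have hsep : (C : Set ℕ).Pairwise fun i j => m < Nat.dist i j := fun i hi j hj hij =>
    Nat.lt_dist_of_modEq ((mem_filter.1 hi).2.trans (mem_filter.1 hj).2.symm) hij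
  calc _ ≤ 1 - exp (-∑ k ∈ C, P.real (A k)) := by gcongr
    _ ≤ P.real (⋃ k ∈ C, A k) := one_sub_exp_neg_sum_le_measureReal_biUnion
        (fun k hk => hA k (hC hk)) (hdep.measureReal_biInter_compl_eq_prod hC hsep)
    _ ≤ _ := measureReal_mono (Set.biUnion_subset_biUnion_left hC) (measure_ne_top P _)

end MDepFamily

lemma exists_lt_one_sub_exp_neg_mul {t : ℝ} (ht : 1 < t) :
    ∃ q : ℝ, 0 ≤ q ∧ q ≤ 1 ∧ q < 1 - exp (-(t * q)) := by
  -- `q = (t - 1) / (2t)` gives `(1 - q) (1 + t q) = (t + 1)² / (4t) > 1`; then use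
  -- `exp (t q) ≥ 1 + t q`.
  refine ⟨(t - 1) / (2 * t), by positivity, by rw [div_le_one (by positivity)]; linarith, ?_⟩
  have htq : t * ((t - 1) / (2 * t)) = (t - 1) / 2 := by field_simp
  rw [htq, exp_neg, lt_sub_iff_add_lt, ← lt_sub_iff_add_lt', inv_lt_iff_one_lt_mul₀ (exp_pos _)]
  calc 1 < (1 - (t - 1) / (2 * t)) * ((t - 1) / 2 + 1) := by
        field_simp
        nlinarith [sq_pos_of_pos (sub_pos.2 ht)]
    _ ≤ (1 - (t - 1) / (2 * t)) * exp ((t - 1) / 2) := by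
        gcongr
        · rw [sub_nonneg, div_le_one (by positivity)]
          linarith
        · exact add_one_le_exp _

/-- Proposition (sharpness of the `m`-dependent constant): the supremum of all `c > 0`
such that `P(⋃ₖ A k) ≥ 1 − exp(−c ∑ₖ P(A k))` holds for every finite `m`-dependent
family of events on every probability space equals `1/(m+1)`. -/
theorem m_dependent_constant_sharp (m : ℕ) :
    sSup {c : ℝ | 0 < c ∧
        ∀ (Ω : Type) (inst : MeasurableSpace Ω) (P : Measure Ω),
          IsProbabilityMeasure P →
          ∀ N : ℕ, 1 ≤ N → ∀ A : ℕ → Set Ω,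
            (∀ k ∈ Finset.Icc 1 N, MeasurableSet (A k)) →
            MDepFamily P m N A →
            1 - Real.exp (-(c * ∑ k ∈ Finset.Icc 1 N, (P (A k)).toReal)) ≤
              (P (⋃ k ∈ Finset.Icc 1 N, A k)).toReal}
      = 1 / ((m : ℝ) + 1) := by
  refine IsGreatest.csSup_eq ⟨⟨by positivity, fun Ω _ P _ N _ A hA hdep =>
    hdep.one_sub_exp_le_measureReal_biUnion hA⟩, ?_⟩
  rintro c ⟨-, hc⟩
  by_contra! hlt
  obtain ⟨q, hq0, hq1, hq⟩ := exists_lt_one_sub_exp_neg_mul (t := c * (m + 1))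
    (by rwa [div_lt_iff₀ (by positivity)] at hlt)
  let P := bernoulliMeasure true false ⟨q, hq0, hq1⟩
  have hP : P.real {true} = q := by simp [P]
  have hU : ⋃ k ∈ Icc 1 (m + 1), ({true} : Set Bool) = {true} :=
    Set.biUnion_const ⟨1, by simp⟩ _
  have hbound := hc Bool _ P inferInstance (m + 1) (by omega) (fun _ => {true})
    (fun _ _ => trivial) (MDepFamily.of_le_succ le_rfl)
  simp only [← measureReal_def, hU, hP, sum_const, Nat.card_Icc, Nat.add_sub_cancel,
    nsmul_eq_mul, Nat.cast_add, Nat.cast_one, ← mul_assoc] at hbound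
  linarith
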